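/- arXiv:1312.6464 — 2 statements merged into one kernel-verified Lean document; each statement's English description precedes it below -/
import Mathlib

section
/- Consider the one-dimensional quadratic q(t) := −t‖g‖² + ½ t² c where c := gᵀH g and g ≠ 0, minimized over the interval [0, Δ/‖g‖]. If c ≤ 0, the minimum is attained at t = Δ/‖g‖ with value q(Δ/‖g‖) ≤ −½ Δ‖g‖; if c > 0, the minimum of q over the interval is at most −½ ‖g‖ · min(‖g‖³/c, Δ). -/
open scoped RealInnerProductSpace

theorem stmt_8 {n : ℕ}
    (g : EuclideanSpace ℝ (Fin n)) (hg : g ≠ 0)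
    (H : EuclideanSpace ℝ (Fin n) →L[ℝ] EuclideanSpace ℝ (Fin n))
    (hsym : ∀ x y, ⟪H x, y⟫ = ⟪x, H y⟫)
    (c : ℝ) (hc : c = ⟪g, H g⟫)
    (Δ : ℝ) (hΔ : 0 < Δ)
    (q : ℝ → ℝ) (hq : q = fun t => -t * ‖g‖ ^ 2 + t ^ 2 / 2 * c) :
    (c ≤ 0 → (∀ t ∈ Set.Icc (0 : ℝ) (Δ / ‖g‖), q (Δ / ‖g‖) ≤ q t) ∧
      q (Δ / ‖g‖) ≤ -(1/2) * Δ * ‖g‖) ∧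
    (0 < c → ∃ t ∈ Set.Icc (0 : ℝ) (Δ / ‖g‖),
      q t ≤ -(1/2) * ‖g‖ * min (‖g‖ ^ 3 / c) Δ) := by
  have hN : (0:ℝ) < ‖g‖ := norm_pos_iff.mpr hg
  subst hq
  set N := ‖g‖ with hNdef
  constructor
  · intro hcle
    constructor
    · rintro t ⟨ht0, htT⟩
      simp only
      set T := Δ / N with hT
      have key : -T * N ^ 2 + T ^ 2 / 2 * c - (-t * N ^ 2 + t ^ 2 / 2 * c)
          = (t - T) * N ^ 2 + (T - t) * (T + t) / 2 * c := by ring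
      have h1 : (t - T) * N ^ 2 ≤ 0 := by nlinarith
      have h2 : (T - t) * (T + t) / 2 * c ≤ 0 := by
        apply mul_nonpos_of_nonneg_of_nonpos _ hcle
        have : 0 ≤ T - t := by linarith
        positivity
      linarith
    · simp only
      have hT : 0 < Δ / N := div_pos hΔ hN
      have h1 : (Δ / N) ^ 2 / 2 * c ≤ 0 := by
        apply mul_nonpos_of_nonneg_of_nonpos _ hcle; positivity
      have h2 : -(Δ / N) * N ^ 2 = -Δ * N := by field_simp
      nlinarith
  · intro hcpos
    rcases le_total (N ^ 3 / c) Δ with h | h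
    · refine ⟨N ^ 2 / c, ⟨by positivity, ?_⟩, ?_⟩
      · rw [div_le_div_iff₀ hcpos hN]
        have := (div_le_iff₀ hcpos).mp h
        nlinarith
      · simp only
        rw [min_eq_left h]
        have : -(N ^ 2 / c) * N ^ 2 + (N ^ 2 / c) ^ 2 / 2 * c = -(1/2) * N * (N ^ 3 / c) := by
          field_simp; ring
        linarith
    · refine ⟨Δ / N, ⟨le_of_lt (div_pos hΔ hN), le_refl _⟩, ?_⟩
      simp only
      rw [min_eq_right h]
      have hΔc : Δ * c ≤ N ^ 3 / N * N := by
        have : Δ ≤ N ^ 3 / c := h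
        rw [div_mul_cancel₀ _ (ne_of_gt hN)]
        calc Δ * c ≤ (N ^ 3 / c) * c := by nlinarith
          _ = N ^ 3 := by field_simp
      have key : -(Δ / N) * N ^ 2 + (Δ / N) ^ 2 / 2 * c
          = -Δ * N + Δ ^ 2 * c / (2 * N ^ 2) := by field_simp
      have h2 : Δ ^ 2 * c / (2 * N ^ 2) ≤ Δ * N / 2 := by
        rw [div_le_div_iff₀ (by positivity) (by norm_num)]
        have : Δ * c ≤ N ^ 3 := by
          calc Δ * c ≤ (N ^ 3 / c) * c := by nlinarith
            _ = N ^ 3 := by field_simp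
        nlinarith
      linarith
end

section
/- Let φ_p : ℝⁿ → ℝ be convex and differentiable, and suppose u∞ is a fixed point of the modifier-adaptation iteration: u∞ minimizes the modified model m(u) = φ_p̂(u) + λᵀu over ℝⁿ, where λ = ∇φ_p(u∞) − ∇φ_p̂(u∞) and φ_p̂ is differentiable. Then u∞ is a global minimizer of φ_p. -/
open scoped RealInnerProductSpace

/-! The modifier `λ` makes the modified model match `φ_p` to first order at `u∞`, so
stationarity of the model at its minimizer `u∞` forces `∇φ_p(u∞) = 0`. Restricted to any line
through `u∞`, the convex function `φ_p` then has zero derivative at `u∞`, and a convex function of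
one variable lies above its tangent lines. -/

theorem ConvexOn.isMinOn_of_hasFDerivAt_eq_zero {E : Type*} [NormedAddCommGroup E]
    [NormedSpace ℝ E] {s : Set E} {f : E → ℝ} {x : E} (hf : ConvexOn ℝ s f) (hx : x ∈ s)
    (hf' : HasFDerivAt f (0 : E →L[ℝ] ℝ) x) : IsMinOn f s x := by
  intro y hy
  have hconv : ConvexOn ℝ (AffineMap.lineMap (k := ℝ) x y ⁻¹' s)
      (f ∘ AffineMap.lineMap x y) :=
    hf.comp_affineMap _
  have hderiv : HasDerivAt (f ∘ AffineMap.lineMap (k := ℝ) x y) 0 0 := by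
    simpa using hf'.comp_hasDerivAt_of_eq (0 : ℝ) AffineMap.hasDerivAt_lineMap
      (AffineMap.lineMap_apply_zero x y).symm
  simpa [slope] using hconv.le_slope_of_hasDerivAt (x := 0) (y := 1) (by simpa) (by simpa)
    one_pos hderiv

section ModifierAdaptation

variable {F : Type*} [NormedAddCommGroup F] [InnerProductSpace ℝ F] [CompleteSpace F]

noncomputable def modifiedModel (f g : F → ℝ) (x : F) (u : F) : ℝ :=
  g u + ⟪gradient f x - gradient g x, u⟫

variable {f g : F → ℝ} {x : F}

theorem hasFDerivAt_modifiedModel (hg : DifferentiableAt ℝ g x) :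
    HasFDerivAt (modifiedModel f g x) (fderiv ℝ f x) x := by
  have hsum : fderiv ℝ g x + innerSL ℝ (gradient f x - gradient g x) = fderiv ℝ f x := by
    ext v
    simp [inner_gradient_left]
  exact (hg.hasFDerivAt.add (innerSL ℝ _).hasFDerivAt).congr_fderiv hsum

theorem IsLocalMin.fderiv_eq_zero_of_modifiedModel (hg : DifferentiableAt ℝ g x)
    (hmin : IsLocalMin (modifiedModel f g x) x) : fderiv ℝ f x = 0 :=
  hmin.hasFDerivAt_eq_zero (hasFDerivAt_modifiedModel hg)

end ModifierAdaptation

theorem stmt_15 {n : ℕ}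
    (φp φph : EuclideanSpace ℝ (Fin n) → ℝ)
    (hconv : ConvexOn ℝ Set.univ φp)
    (hφp : Differentiable ℝ φp) (hφph : Differentiable ℝ φph)
    (uinf : EuclideanSpace ℝ (Fin n))
    (lam : EuclideanSpace ℝ (Fin n))
    (hlam : lam = gradient φp uinf - gradient φph uinf)
    (m : EuclideanSpace ℝ (Fin n) → ℝ)
    (hm : m = fun u => φph u + ⟪lam, u⟫)
    (hmin : ∀ u, m uinf ≤ m u) :
    ∀ u, φp uinf ≤ φp u := by
  have hmodel : m = modifiedModel φp φph uinf := by rw [hm, hlam]; rfl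
  have hcrit : fderiv ℝ φp uinf = 0 :=
    IsLocalMin.fderiv_eq_zero_of_modifiedModel (hφph uinf)
      (hmodel ▸ Filter.Eventually.of_forall hmin)
  have hzero : HasFDerivAt φp 0 uinf := hcrit ▸ (hφp uinf).hasFDerivAt
  exact fun u => hconv.isMinOn_of_hasFDerivAt_eq_zero (Set.mem_univ _) hzero (Set.mem_univ u)
end
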